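/- arXiv:1908.10603 — 4 statements merged into one kernel-verified Lean document; each statement's English description precedes it below -/
import Mathlib

section
/- Let 0 ≤ δ₁ < δ₂ < ∞ and E be a measurable subset of [δ₁,δ₂] with positive Lebesgue measure. Then there exist constants ρ ∈ (0,1) and C₀, C₀′ > 0 such that for almost every t* ∈ E and every R > 0, there exists a strictly decreasing sequence (t_j)_{j≥0} in (t*, t*+R) ∩ E with t_j → t*, satisfying: (i) for all j ≥ 1, λ((t_j, (t_j + t_{j−1})/2) ∩ E) ≥ ρ·(t_{j−1} − t_j)/2 > 0; (ii) for all j ≥ 1, t_j − t_{j+1} ≥ C₀(t_{j−1} − t_j) > 0; (iii) t₀ − t₁ ≥ C₀′(t₀ − t*) > 0. -/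
open MeasureTheory Filter Topology

/-!
By the Lebesgue density theorem, at almost every `t* ∈ E` the set `E` fills more than `15/16` of
every short right interval `(t*, t* + r)`. Then `E` meets every window `(t* + d/3, t* + d/2)`, and
choosing `t_{n+1}` in the window for `d = t_n - t*` gives a sequence whose distances to `t*` shrink
by a factor between `1/3` and `1/2` at each step. Such a sequence satisfies the gap conditions, and
density applied to `(t*, (t_j + t_{j-1})/2)` shows that `E` fills a fixed fraction of
`(t_j, (t_j + t_{j-1})/2)`, since `t_j - t*` is at most half of `t_{j-1} - t*`.
-/

open Set

theorem ofReal_sub_le_volume_inter_Ioo {E : Set ℝ} {x a b m : ℝ}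
    (hm : ENNReal.ofReal m ≤ volume (E ∩ Ioo x b)) (hxa : x ≤ a) :
    ENNReal.ofReal (m - (a - x)) ≤ volume (E ∩ Ioo a b) := by
  have hcover : E ∩ Ioo x b ⊆ Ioc x a ∪ (E ∩ Ioo a b) := by
    rintro y ⟨hyE, hxy, hyb⟩
    rcases le_or_gt y a with hya | hay
    · exact Or.inl ⟨hxy, hya⟩
    · exact Or.inr ⟨hyE, hay, hyb⟩
  have hle : ENNReal.ofReal m ≤ ENNReal.ofReal (a - x) + volume (E ∩ Ioo a b) :=
    calc ENNReal.ofReal m ≤ volume (E ∩ Ioo x b) := hm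
      _ ≤ volume (Ioc x a) + volume (E ∩ Ioo a b) :=
        (measure_mono hcover).trans (measure_union_le _ _)
      _ = ENNReal.ofReal (a - x) + volume (E ∩ Ioo a b) := by rw [Real.volume_Ioc]
  rw [ENNReal.ofReal_sub _ (sub_nonneg.mpr hxa)]
  exact tsub_le_iff_left.mpr hle

theorem ae_eventually_ofReal_mul_le_volume_inter_Ioo (E : Set ℝ) :
    ∀ᵐ x ∂volume.restrict E, ∀ c < 1,
      ∀ᶠ r in 𝓝[>] 0, ENNReal.ofReal (c * r) ≤ volume (E ∩ Ioo x (x + r)) := by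
  filter_upwards [Besicovitch.ae_tendsto_measure_inter_div volume E] with x hx c hc
  have hlt : ENNReal.ofReal ((1 + c) / 2) < 1 := by
    rw [ENNReal.ofReal_lt_one]; linarith
  filter_upwards [hx (Ioi_mem_nhds hlt), self_mem_nhdsWithin] with r hr (hr0 : 0 < r)
  have hball : volume (Metric.closedBall x r) = ENNReal.ofReal (2 * r) := Real.volume_closedBall x r
  have hball_ne_zero : volume (Metric.closedBall x r) ≠ 0 := by
    rw [hball, ENNReal.ofReal_ne_zero_iff]; linarith
  have hdens : ENNReal.ofReal ((1 + c) * r) ≤ volume (E ∩ Ioo (x - r) (x + r)) := by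
    have h := (ENNReal.lt_div_iff_mul_lt (Or.inl hball_ne_zero)
      (Or.inl measure_closedBall_lt_top.ne)).mp hr
    rw [hball, ← ENNReal.ofReal_mul' (by linarith), Real.closedBall_eq_Icc,
      measure_congr (EventuallyEq.rfl.inter Ioo_ae_eq_Icc.symm)] at h
    rw [show (1 + c) * r = (1 + c) / 2 * (2 * r) by ring]
    exact h.le
  convert ofReal_sub_le_volume_inter_Ioo hdens (by linarith : x - r ≤ x) using 2
  ring

theorem inter_Ioo_nonempty_of_ofReal_le {E : Set ℝ} {x c d : ℝ} (hc : 2 / 3 < c) (hd : 0 < d)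
    (hdens : ENNReal.ofReal (c * (d / 2)) ≤ volume (E ∩ Ioo x (x + d / 2))) :
    (E ∩ Ioo (x + d / 3) (x + d / 2)).Nonempty := by
  have h := ofReal_sub_le_volume_inter_Ioo hdens (by linarith : x ≤ x + d / 3)
  refine nonempty_of_measure_ne_zero (lt_of_lt_of_le ?_ h).ne'
  rw [ENNReal.ofReal_pos]
  nlinarith

theorem ofReal_le_volume_Ioo_midpoint_inter {E : Set ℝ} {x a b : ℝ}
    (hdens : ENNReal.ofReal (15 / 16 * ((a + b) / 2 - x)) ≤ volume (E ∩ Ioo x ((a + b) / 2)))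
    (hxa : x ≤ a) (hab : a - x ≤ (b - x) / 2) :
    ENNReal.ofReal (3 / 4 * ((b - a) / 2)) ≤ volume (Ioo a ((a + b) / 2) ∩ E) := by
  rw [inter_comm]
  refine le_trans (ENNReal.ofReal_le_ofReal ?_) (ofReal_sub_le_volume_inter_Ioo hdens hxa)
  linarith

structure ThirdToHalfApproach (x : ℝ) (t : ℕ → ℝ) : Prop where
  lt_apply_zero : x < t 0
  step : ∀ n, t (n + 1) - x ∈ Ioo ((t n - x) / 3) ((t n - x) / 2)

namespace ThirdToHalfApproach

variable {x : ℝ} {t : ℕ → ℝ}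

theorem lt (ht : ThirdToHalfApproach x t) (n : ℕ) : x < t n := by
  induction n with
  | zero => exact ht.lt_apply_zero
  | succ n ih => linarith [(ht.step n).1]

theorem strictAnti (ht : ThirdToHalfApproach x t) : StrictAnti t :=
  strictAnti_nat_of_succ_lt fun n => by linarith [(ht.step n).2, ht.lt n]

theorem sub_le_pow (ht : ThirdToHalfApproach x t) (n : ℕ) :
    t n - x ≤ (t 0 - x) * (1 / 2) ^ n := by
  induction n with
  | zero => simp
  | succ n ih => rw [pow_succ]; linarith [(ht.step n).2]

theorem tendsto (ht : ThirdToHalfApproach x t) : Tendsto t atTop (𝓝 x) := by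
  have hgeom : Tendsto (fun n : ℕ => (t 0 - x) * (1 / 2 : ℝ) ^ n) atTop (𝓝 0) := by
    simpa using (tendsto_pow_atTop_nhds_zero_of_lt_one (by norm_num : (0 : ℝ) ≤ 1 / 2)
      (by norm_num)).const_mul (t 0 - x)
  have hsub : Tendsto (fun n => t n - x) atTop (𝓝 0) :=
    squeeze_zero (fun n => (sub_pos.mpr (ht.lt n)).le) ht.sub_le_pow hgeom
  simpa using hsub.add_const x

theorem half_mul_le_sub_succ (ht : ThirdToHalfApproach x t) (n : ℕ) :
    1 / 2 * (t n - x) ≤ t n - t (n + 1) := by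
  linarith [(ht.step n).2]

theorem quarter_mul_le_sub_succ_succ (ht : ThirdToHalfApproach x t) (n : ℕ) :
    1 / 4 * (t n - t (n + 1)) ≤ t (n + 1) - t (n + 2) := by
  linarith [(ht.step n).1, ht.half_mul_le_sub_succ (n + 1)]

theorem ofReal_le_volume_Ioo_midpoint_succ_inter (ht : ThirdToHalfApproach x t)
    {E : Set ℝ} {h : ℝ}
    (hdens : ∀ r ∈ Ioo 0 h, ENNReal.ofReal (15 / 16 * r) ≤ volume (E ∩ Ioo x (x + r)))
    (hh : t 0 - x ≤ h) (n : ℕ) :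
    ENNReal.ofReal (3 / 4 * ((t n - t (n + 1)) / 2)) ≤
      volume (Ioo (t (n + 1)) ((t (n + 1) + t n) / 2) ∩ E) := by
  have hmid : (t (n + 1) + t n) / 2 - x ∈ Ioo 0 h := by
    have hle_zero := ht.strictAnti.antitone (Nat.zero_le n)
    constructor <;> linarith [ht.lt n, ht.lt (n + 1), ht.strictAnti (Nat.lt_succ_self n)]
  have hdens_mid := hdens _ hmid
  rw [add_sub_cancel] at hdens_mid
  exact ofReal_le_volume_Ioo_midpoint_inter hdens_mid (ht.lt (n + 1)).le
    (ht.step n).2.le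

end ThirdToHalfApproach

theorem exists_thirdToHalfApproach_mem {E : Set ℝ} {x c h s : ℝ} (hc : 2 / 3 < c)
    (hs : 0 < s) (hsh : s ≤ h)
    (hdens : ∀ r ∈ Ioo 0 h, ENNReal.ofReal (c * r) ≤ volume (E ∩ Ioo x (x + r))) :
    ∃ t, ThirdToHalfApproach x t ∧ (∀ n, t n ∈ E) ∧ t 0 - x < s / 2 := by
  have hwindow : ∀ d ∈ Ioc 0 h, ∃ y ∈ E, y - x ∈ Ioo (d / 3) (d / 2) := by
    rintro d ⟨hd, hdh⟩
    obtain ⟨y, hyE, hy⟩ :=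
      inter_Ioo_nonempty_of_ofReal_le hc hd (hdens _ ⟨by linarith, by linarith⟩)
    exact ⟨y, hyE, by linarith [hy.1], by linarith [hy.2]⟩
  set S := {y ∈ E | y - x ∈ Ioo 0 s}
  have hnext : ∀ y : S, ∃ z : S, (z : ℝ) - x ∈ Ioo ((y - x) / 3) ((y - x) / 2) := by
    rintro ⟨y, hyE, hy0, hys⟩
    obtain ⟨z, hzE, hz⟩ := hwindow (y - x) ⟨hy0, by linarith⟩
    exact ⟨⟨z, hzE, by linarith [hz.1], by linarith [hz.2]⟩, hz⟩
  choose next hnext using hnext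
  obtain ⟨a, haE, ha⟩ := hwindow s ⟨hs, hsh⟩
  let a' : S := ⟨a, haE, by linarith [ha.1], by linarith [ha.2]⟩
  refine ⟨fun n => (next^[n] a' : ℝ), ⟨show x < a by linarith [ha.1], fun n => ?_⟩,
    fun n => (next^[n] a').2.1, ha.2⟩
  simp only [Function.iterate_succ_apply']
  exact hnext _

theorem exists_good_sequence_in_measurable_set_general (E : Set ℝ) :
    ∃ ρ C₀ C₀' : ℝ, 0 < ρ ∧ ρ < 1 ∧ 0 < C₀ ∧ 0 < C₀' ∧
      ∀ᵐ tstar ∂(volume.restrict E), ∀ R : ℝ, 0 < R →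
        ∃ t : ℕ → ℝ, StrictAnti t ∧
          (∀ j : ℕ, t j ∈ Set.Ioo tstar (tstar + R) ∩ E) ∧
          Tendsto t atTop (𝓝 tstar) ∧
          (∀ j : ℕ, 1 ≤ j →
            ENNReal.ofReal (ρ * ((t (j - 1) - t j) / 2)) ≤
              volume (Set.Ioo (t j) ((t j + t (j - 1)) / 2) ∩ E) ∧
            0 < (t (j - 1) - t j) / 2) ∧
          (∀ j : ℕ, 1 ≤ j →
            C₀ * (t (j - 1) - t j) ≤ t j - t (j + 1) ∧ 0 < C₀ * (t (j - 1) - t j)) ∧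
          (C₀' * (t 0 - tstar) ≤ t 0 - t 1 ∧ 0 < C₀' * (t 0 - tstar)) := by
  refine ⟨3 / 4, 1 / 4, 1 / 2, by norm_num, by norm_num, by norm_num, by norm_num, ?_⟩
  filter_upwards [ae_eventually_ofReal_mul_le_volume_inter_Ioo E] with x hx R hR
  obtain ⟨h, hh, hdens⟩ := (nhdsGT_basis 0).eventually_iff.mp (hx (15 / 16) (by norm_num))
  obtain ⟨t, ht, htE, ht0⟩ := exists_thirdToHalfApproach_mem (by norm_num) (lt_min hR hh)
    (min_le_right R h) hdens
  have hgap : ∀ n, 0 < t n - t (n + 1) := fun n => sub_pos.mpr (ht.strictAnti n.lt_succ_self)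
  refine ⟨t, ht.strictAnti, fun j => ⟨⟨ht.lt j, ?_⟩, htE j⟩, ht.tendsto, ?_, ?_,
    ht.half_mul_le_sub_succ 0, by linarith [ht.lt 0]⟩
  · linarith [ht.strictAnti.antitone (Nat.zero_le j), min_le_left R h]
  · rintro (_ | n) hn
    · omega
    rw [Nat.add_sub_cancel]
    exact ⟨ht.ofReal_le_volume_Ioo_midpoint_succ_inter hdens (by linarith [min_le_right R h]) n,
      by linarith [hgap n]⟩
  · rintro (_ | n) hn
    · omega
    rw [Nat.add_sub_cancel]
    exact ⟨ht.quarter_mul_le_sub_succ_succ n, by linarith [hgap n]⟩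

/-- Proposition 3.1 of the paper. -/
theorem exists_good_sequence_in_measurable_set (δ₁ δ₂ : ℝ) (h₁ : 0 ≤ δ₁) (h₂ : δ₁ < δ₂)
    (E : Set ℝ) (hE : MeasurableSet E) (hEsub : E ⊆ Set.Icc δ₁ δ₂)
    (hpos : 0 < volume E) :
    ∃ ρ C₀ C₀' : ℝ, 0 < ρ ∧ ρ < 1 ∧ 0 < C₀ ∧ 0 < C₀' ∧
      ∀ᵐ tstar ∂(volume.restrict E), ∀ R : ℝ, 0 < R →
        ∃ t : ℕ → ℝ, StrictAnti t ∧
          (∀ j : ℕ, t j ∈ Set.Ioo tstar (tstar + R) ∩ E) ∧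
          Tendsto t atTop (𝓝 tstar) ∧
          (∀ j : ℕ, 1 ≤ j →
            ENNReal.ofReal (ρ * ((t (j - 1) - t j) / 2)) ≤
              volume (Set.Ioo (t j) ((t j + t (j - 1)) / 2) ∩ E) ∧
            0 < (t (j - 1) - t j) / 2) ∧
          (∀ j : ℕ, 1 ≤ j →
            C₀ * (t (j - 1) - t j) ≤ t j - t (j + 1) ∧ 0 < C₀ * (t (j - 1) - t j)) ∧
          (C₀' * (t 0 - tstar) ≤ t 0 - t 1 ∧ 0 < C₀' * (t 0 - tstar)) :=
  exists_good_sequence_in_measurable_set_general E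
end

section
/- Let ω = (⋃_{n∈ℤ} (n − ε_{|n|}, n + ε_{|n|})) × ℝ ⊂ ℝ², where (ε_n)_{n≥0} is a non-increasing sequence in [0,1] with ε_n → 0. Then for every N ≥ 1 and n ≥ N, λ(((n,0) + [−N,N]²) ∩ ω) ≤ 4N(2N+1)ε_{n−N}. In particular, ω is not a thick subset of ℝ². -/
open MeasureTheory

/-- A measurable set `S ⊆ ℝ²` is thick. -/
def IsThick2 (S : Set (ℝ × ℝ)) : Prop :=
  ∃ δ α₁ α₂ : ℝ, 0 < δ ∧ δ ≤ 1 ∧ 0 < α₁ ∧ 0 < α₂ ∧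
    ∀ x : ℝ × ℝ, ENNReal.ofReal (δ * α₁ * α₂) ≤
      volume (S ∩ Set.Icc x.1 (x.1 + α₁) ×ˢ Set.Icc x.2 (x.2 + α₂))

lemma strip1D (ε : ℕ → ℝ) (hε : ∀ n, ε n ∈ Set.Icc (0 : ℝ) 1) (hmono : Antitone ε)
    (N n : ℕ) (hn : N ≤ n) :
    volume (Set.Icc ((n : ℝ) - N) ((n : ℝ) + N) ∩
      {x : ℝ | ∃ m : ℤ, x ∈ Set.Ioo ((m : ℝ) - ε m.natAbs) ((m : ℝ) + ε m.natAbs)}) ≤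
    ENNReal.ofReal ((2 * N + 1) * (2 * ε (n - N))) := by
  set s : Finset ℤ := Finset.Icc ((n : ℤ) - N) ((n : ℤ) + N) with hs
  have hsub : Set.Icc ((n : ℝ) - N) ((n : ℝ) + N) ∩
      {x : ℝ | ∃ m : ℤ, x ∈ Set.Ioo ((m : ℝ) - ε m.natAbs) ((m : ℝ) + ε m.natAbs)} ⊆
      ⋃ m ∈ s, Set.Ioo ((m : ℝ) - ε m.natAbs) ((m : ℝ) + ε m.natAbs) := by
    rintro x ⟨⟨hx1, hx2⟩, m, hm1, hm2⟩
    refine Set.mem_biUnion ?_ ⟨hm1, hm2⟩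
    have he0 := (hε m.natAbs).1
    have he1 := (hε m.natAbs).2
    show m ∈ s
    rw [hs, Finset.mem_Icc]
    constructor
    · have : ((n : ℤ) - N - 1 : ℤ) < m := by
        have : ((n : ℝ) - N - 1 : ℝ) < (m : ℝ) := by linarith
        exact_mod_cast this
      omega
    · have : (m : ℤ) < (n : ℤ) + N + 1 := by
        have : (m : ℝ) < (n : ℝ) + N + 1 := by linarith
        exact_mod_cast this
      omega
  calc volume _ ≤ volume (⋃ m ∈ s, Set.Ioo ((m : ℝ) - ε m.natAbs) ((m : ℝ) + ε m.natAbs)) :=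
        measure_mono hsub
    _ ≤ ∑ m ∈ s, volume (Set.Ioo ((m : ℝ) - ε m.natAbs) ((m : ℝ) + ε m.natAbs)) :=
        measure_biUnion_finset_le s _
    _ ≤ ∑ m ∈ s, ENNReal.ofReal (2 * ε (n - N)) := by
        refine Finset.sum_le_sum fun m hm => ?_
        rw [Real.volume_Ioo]
        apply ENNReal.ofReal_le_ofReal
        have hm' : ((n : ℤ) - N) ≤ m := (Finset.mem_Icc.mp hm).1
        have h0m : (0 : ℤ) ≤ m := by omega
        have hnm : (n - N : ℕ) ≤ m.natAbs := by omega
        have := hmono hnm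
        linarith
    _ = (2 * N + 1) • ENNReal.ofReal (2 * ε (n - N)) := by
        rw [Finset.sum_const]
        congr 1
        rw [hs, Int.card_Icc]
        omega
    _ ≤ ENNReal.ofReal ((2 * N + 1) * (2 * ε (n - N))) := by
        rw [nsmul_eq_mul, ← ENNReal.ofReal_natCast (2 * N + 1),
          ← ENNReal.ofReal_mul (by positivity)]
        exact le_of_eq (by push_cast; ring_nf)

/-- The union of vertical strips of vanishing widths: cube estimate and non-thickness. -/
theorem strips_not_thick (ε : ℕ → ℝ) (hε : ∀ n, ε n ∈ Set.Icc (0 : ℝ) 1)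
    (hmono : Antitone ε) (hlim : Filter.Tendsto ε Filter.atTop (nhds 0))
    (ω : Set (ℝ × ℝ))
    (hω : ω = {p : ℝ × ℝ | ∃ n : ℤ,
      p.1 ∈ Set.Ioo ((n : ℝ) - ε n.natAbs) ((n : ℝ) + ε n.natAbs)}) :
    (∀ N : ℕ, 1 ≤ N → ∀ n : ℕ, N ≤ n →
      volume ((Set.Icc ((n : ℝ) - N) ((n : ℝ) + N) ×ˢ
          Set.Icc (-(N : ℝ)) (N : ℝ)) ∩ ω) ≤
        ENNReal.ofReal (4 * N * (2 * N + 1) * ε (n - N))) ∧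
    ¬ IsThick2 ω := by
  set U : Set ℝ := {x : ℝ | ∃ m : ℤ, x ∈ Set.Ioo ((m : ℝ) - ε m.natAbs) ((m : ℝ) + ε m.natAbs)}
    with hU
  have hωU : ω = U ×ˢ (Set.univ : Set ℝ) := by
    rw [hω]; ext p; simp [hU, Set.mem_prod]
  have key : ∀ N : ℕ, 1 ≤ N → ∀ n : ℕ, N ≤ n →
      volume ((Set.Icc ((n : ℝ) - N) ((n : ℝ) + N) ×ˢ
          Set.Icc (-(N : ℝ)) (N : ℝ)) ∩ ω) ≤
        ENNReal.ofReal (4 * N * (2 * N + 1) * ε (n - N)) := by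
    intro N hN n hn
    have hεn : 0 ≤ ε (n - N) := (hε _).1
    have hrw : (Set.Icc ((n : ℝ) - N) ((n : ℝ) + N) ×ˢ Set.Icc (-(N : ℝ)) (N : ℝ)) ∩ ω =
        (Set.Icc ((n : ℝ) - N) ((n : ℝ) + N) ∩ U) ×ˢ (Set.Icc (-(N : ℝ)) (N : ℝ)) := by
      rw [hωU, Set.prod_inter_prod, Set.inter_univ]
    rw [hrw, show (volume : Measure (ℝ × ℝ)) = (volume : Measure ℝ).prod volume from
      Measure.volume_eq_prod ℝ ℝ, Measure.prod_prod]
    have h1 := strip1D ε hε hmono N n hn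
    have h2 : volume (Set.Icc (-(N : ℝ)) (N : ℝ)) = ENNReal.ofReal (2 * N) := by
      rw [Real.volume_Icc]; ring_nf
    rw [h2]
    calc volume (Set.Icc ((n : ℝ) - N) ((n : ℝ) + N) ∩ U) * ENNReal.ofReal (2 * N)
        ≤ ENNReal.ofReal ((2 * N + 1) * (2 * ε (n - N))) * ENNReal.ofReal (2 * N) := by
          gcongr
      _ = ENNReal.ofReal (4 * N * (2 * N + 1) * ε (n - N)) := by
          rw [← ENNReal.ofReal_mul (by positivity)]
          congr 1; ring
  refine ⟨key, ?_⟩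
  rintro ⟨δ, α₁, α₂, hδ, hδ1, hα₁, hα₂, hthick⟩
  set N : ℕ := ⌈α₁⌉₊ + ⌈α₂⌉₊ + 1 with hN
  have hN1 : 1 ≤ N := by omega
  have hceil : (⌈α₁⌉₊ : ℝ) + ⌈α₂⌉₊ + 1 = (N : ℝ) := by push_cast [hN]; ring
  have hα₁N : α₁ ≤ 2 * N := by
    have h1 := Nat.le_ceil α₁
    have h2 : (0 : ℝ) ≤ ⌈α₂⌉₊ := by positivity
    nlinarith [Nat.cast_nonneg (α := ℝ) N]
  have hα₂N : α₂ ≤ 2 * N := by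
    have h1 := Nat.le_ceil α₂
    have h2 : (0 : ℝ) ≤ ⌈α₁⌉₊ := by positivity
    nlinarith [Nat.cast_nonneg (α := ℝ) N]
  have hc : (0 : ℝ) < 4 * N * (2 * N + 1) := by positivity
  have hδv : (0 : ℝ) < δ * α₁ * α₂ := by positivity
  obtain ⟨n₀, hn₀⟩ := (Metric.tendsto_atTop.mp hlim (δ * α₁ * α₂ / (4 * N * (2 * N + 1)))
    (by positivity))
  set n : ℕ := n₀ + N with hn
  have hεsmall : ε (n - N) < δ * α₁ * α₂ / (4 * N * (2 * N + 1)) := by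
    have := hn₀ (n - N) (by omega)
    rw [Real.dist_eq, sub_zero, abs_of_nonneg (hε _).1] at this
    exact this
  have hrect : Set.Icc ((n : ℝ) - N) ((n : ℝ) - N + α₁) ×ˢ
      Set.Icc (-(N : ℝ)) (-(N : ℝ) + α₂) ⊆
      Set.Icc ((n : ℝ) - N) ((n : ℝ) + N) ×ˢ Set.Icc (-(N : ℝ)) (N : ℝ) := by
    apply Set.prod_mono <;> apply Set.Icc_subset_Icc <;> linarith
  have hle := hthick ((n : ℝ) - N, -(N : ℝ))
  simp only at hle
  have : ENNReal.ofReal (δ * α₁ * α₂) ≤ ENNReal.ofReal (4 * N * (2 * N + 1) * ε (n - N)) := by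
    refine hle.trans ?_
    refine le_trans (measure_mono ?_) (key N hN1 n (by omega))
    rw [Set.inter_comm]
    exact Set.inter_subset_inter_left _ hrect
  have hlt : 4 * (N : ℝ) * (2 * N + 1) * ε (n - N) < δ * α₁ * α₂ := by
    have h := hεsmall
    rw [lt_div_iff₀ hc] at h
    nlinarith
  exact absurd this (not_le.mpr (ENNReal.ofReal_lt_ofReal_iff hδv |>.mpr hlt))
end

section
/- Let μ > 0, T > 0, and ω(t) = √(1+2μt)·ω where ω = [−1,1] ∪ ⋃_{n≥1} ((n², n²+n) ∪ (−n²−n, −n²)) ⊂ ℝ. Then for every x > max(5, √(1+2μT)) one has ∫₀^T λ((x−1, x+1) ∩ ω(t)) dt ≥ (x−1)²/μ · ∑_{k ∈ I(x)} (1/k⁴)·(1 − ((x+1)/(x−1))² · 1/(1+1/k)²), where I(x) = {k ≥ 2 : √(x−1)/(1+2μT)^{1/4} ≤ k ≤ (√(4x+5) − 1)/2}. -/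
/-! For `k ∈ I(x)` let `J_k = (τ((x + 1)/(k² + k)), τ((x - 1)/k²)]`, where `τ(s) = (s² - 1)/(2μ)` is
the time at which the dilation factor `√(1 + 2μt)` equals `s`. For `t ∈ J_k` the dilated component
`√(1 + 2μt) · (k², k² + k)` of `ω(t)` contains `(x - 1, x + 1)`, so the integrand equals `2` on
`J_k`. The windows `J_k` are pairwise disjoint subintervals of `(0, T]`, and `2 |J_k|` is exactly
the `k`-th summand. The integrand is integrable because it is the slice measure of a measurable
subset of the plane. -/

open MeasureTheory Set Function
open scoped Pointwise

theorem sum_mul_measureReal_le_setIntegral {α ι : Type*} [MeasurableSpace α] {ρ : Measure α}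
    {f : α → ℝ} {S : Set α} {s : Finset ι} {J : ι → Set α} {c : ℝ}
    (hS : MeasurableSet S) (hSfin : ρ S ≠ ⊤) (hf : IntegrableOn f S ρ) (hf0 : ∀ t ∈ S, 0 ≤ f t)
    (hJ : ∀ i ∈ s, MeasurableSet (J i)) (hJS : ∀ i ∈ s, J i ⊆ S)
    (hdisj : (s : Set ι).PairwiseDisjoint J) (hc : ∀ i ∈ s, ∀ t ∈ J i, c ≤ f t) :
    ∑ i ∈ s, c * ρ.real (J i) ≤ ∫ t in S, f t ∂ρ := by
  have hJfin : ∀ i ∈ s, ρ (J i) ≠ ⊤ := fun i hi =>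
    ne_top_of_le_ne_top hSfin (measure_mono (hJS i hi))
  calc ∑ i ∈ s, c * ρ.real (J i) = ∑ i ∈ s, ∫ t in J i, c ∂ρ := by
        simp only [setIntegral_const, smul_eq_mul, mul_comm]
    _ ≤ ∑ i ∈ s, ∫ t in J i, f t ∂ρ := Finset.sum_le_sum fun i hi =>
        setIntegral_mono_on (integrableOn_const (hJfin i hi)) (hf.mono_set (hJS i hi))
          (hJ i hi) (hc i hi)
    _ = ∫ t in ⋃ i ∈ s, J i, f t ∂ρ :=
        (integral_biUnion_finset s hJ hdisj fun i hi => hf.mono_set (hJS i hi)).symm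
    _ ≤ ∫ t in S, f t ∂ρ :=
        setIntegral_mono_set hf ((ae_restrict_iff' hS).mpr (ae_of_all _ hf0))
          (iUnion₂_subset hJS).eventuallyLE

theorem integrableOn_measureReal_inter_smul {ν ρ : Measure ℝ} [SFinite ν] {A ω S : Set ℝ}
    {c : ℝ → ℝ} (hA : MeasurableSet A) (hAfin : ν A ≠ ⊤) (hω : MeasurableSet ω)
    (hS : MeasurableSet S) (hSfin : ρ S ≠ ⊤) (hc : Measurable c) (hc0 : ∀ t ∈ S, c t ≠ 0) :
    IntegrableOn (fun t => ν.real (A ∩ c t • ω)) S ρ := by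
  set W : Set (ℝ × ℝ) := {p | p.2 ∈ A ∧ (c p.1)⁻¹ * p.2 ∈ ω}
  have hW : MeasurableSet W :=
    (measurable_snd hA).inter (hω.preimage (by fun_prop))
  have hslice : ∀ t ∈ S, Prod.mk t ⁻¹' W = A ∩ c t • ω := fun t ht => by
    ext y
    simp [W, mem_smul_set_iff_inv_smul_mem₀ (hc0 t ht)]
  have hmeas : AEStronglyMeasurable (fun t => ν.real (A ∩ c t • ω)) (ρ.restrict S) :=
    (measurable_measure_prodMk_left (ν := ν) hW).ennreal_toReal.aestronglyMeasurable.congr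
      ((ae_restrict_iff' hS).mpr (ae_of_all _ fun t ht => by
        simp only [Measure.real, hslice t ht]))
  have hbound : ∀ t, ‖ν.real (A ∩ c t • ω)‖ ≤ ν.real A := fun t => by
    rw [Real.norm_of_nonneg measureReal_nonneg]
    exact measureReal_mono inter_subset_left hAfin
  have : IsFiniteMeasure (ρ.restrict S) := isFiniteMeasure_restrict.mpr hSfin
  exact ⟨hmeas, HasFiniteIntegral.of_bounded (ae_of_all _ hbound)⟩

theorem sq_add_le_of_le_sqrt_sub_one_div_two {x k : ℝ} (hk : 0 ≤ k)
    (h : k ≤ (√(4 * x + 5) - 1) / 2) : k ^ 2 + k ≤ x + 1 := by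
  have h' : 2 * k + 1 ≤ √(4 * x + 5) := by linarith
  nlinarith [(Real.le_sqrt' (by linarith : (0 : ℝ) < 2 * k + 1)).mp h']

theorem sq_le_mul_pow_four_of_sqrt_div_rpow_le {y c k : ℝ} (hy : 0 ≤ y) (hc : 0 < c)
    (h : √y / c ^ (1 / 4 : ℝ) ≤ k) : y ^ 2 ≤ c * k ^ 4 := by
  have hroot : (c ^ (1 / 4 : ℝ)) ^ 4 = c := by
    rw [one_div, ← Nat.cast_ofNat, Real.rpow_inv_natCast_pow hc.le (by norm_num)]
  have h' : √y ≤ c ^ (1 / 4 : ℝ) * k := (div_le_iff₀' (by positivity)).mp h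
  calc y ^ 2 = √y ^ 4 := by rw [show 4 = 2 * 2 by rfl, pow_mul, Real.sq_sqrt hy]
    _ ≤ (c ^ (1 / 4 : ℝ) * k) ^ 4 := by gcongr
    _ = c * k ^ 4 := by rw [mul_pow, hroot]

/-- The time at which the dilation factor `√(1 + 2μt)` equals `s`. -/
noncomputable def dilationTime (μ s : ℝ) : ℝ := (s ^ 2 - 1) / (2 * μ)

section dilationTime

variable {μ p q t : ℝ}

theorem dilationTime_le_dilationTime (hμ : 0 < μ) (hp : 0 ≤ p) (hpq : p ≤ q) :
    dilationTime μ p ≤ dilationTime μ q := by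
  unfold dilationTime; gcongr

theorem dilationTime_nonneg (hμ : 0 < μ) (hp : 1 ≤ p) : 0 ≤ dilationTime μ p := by
  unfold dilationTime; have : 1 ≤ p ^ 2 := one_le_pow₀ hp; positivity

theorem dilationTime_le_iff (hμ : 0 < μ) {T : ℝ} :
    dilationTime μ q ≤ T ↔ q ^ 2 ≤ 1 + 2 * μ * T := by
  unfold dilationTime; rw [div_le_iff₀ (by positivity)]; constructor <;> intro h <;> linarith

theorem sqrt_mem_Ioc_of_mem_Ioc_dilationTime (hμ : 0 < μ) (hp : 0 ≤ p) (hq : 0 ≤ q)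
    (ht : t ∈ Ioc (dilationTime μ p) (dilationTime μ q)) : √(1 + 2 * μ * t) ∈ Ioc p q := by
  obtain ⟨hpt, htq⟩ := ht
  unfold dilationTime at hpt htq
  rw [div_lt_iff₀ (by positivity)] at hpt
  rw [le_div_iff₀ (by positivity)] at htq
  exact ⟨(Real.lt_sqrt hp).mpr (by linarith), (Real.sqrt_le_left hq).mpr (by linarith)⟩

end dilationTime

noncomputable def coverWindow (μ x : ℝ) (k : ℕ) : Set ℝ :=
  Ioc (dilationTime μ ((x + 1) / ((k : ℝ) ^ 2 + k))) (dilationTime μ ((x - 1) / (k : ℝ) ^ 2))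

section coverWindow

variable {μ x : ℝ}

theorem Ioo_subset_smul_Ioo_of_mem_coverWindow (hμ : 0 < μ) (hx : 1 ≤ x) {k : ℕ} (hk : 1 ≤ k)
    {t : ℝ} (ht : t ∈ coverWindow μ x k) :
    Ioo (x - 1) (x + 1) ⊆ √(1 + 2 * μ * t) • Ioo ((k : ℝ) ^ 2) ((k : ℝ) ^ 2 + k) := by
  have hk' : (1 : ℝ) ≤ k := by exact_mod_cast hk
  obtain ⟨hlo, hhi⟩ := sqrt_mem_Ioc_of_mem_Ioc_dilationTime hμ (by positivity)
    (div_nonneg (by linarith) (by positivity)) ht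
  rw [LinearOrderedField.smul_Ioo (hlo.trans_le' (by positivity))]
  exact Ioo_subset_Ioo ((le_div_iff₀ (by positivity)).mp hhi)
    ((div_lt_iff₀ (by positivity)).mp hlo).le

theorem div_sq_add_le_div_sq {k : ℝ} (hk : 2 ≤ (k : ℝ)) (hkx : k ^ 2 + k ≤ x + 1) :
    (x + 1) / (k ^ 2 + k) ≤ (x - 1) / k ^ 2 := by
  rw [div_le_div_iff₀ (by positivity) (by positivity)]
  nlinarith

theorem measureReal_coverWindow (hμ : 0 < μ) {k : ℕ} (hk : 2 ≤ k)
    (hkx : (k : ℝ) ^ 2 + k ≤ x + 1) :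
    volume.real (coverWindow μ x k) =
      ((x - 1) ^ 2 / (k : ℝ) ^ 4 - (x + 1) ^ 2 / ((k : ℝ) ^ 2 + k) ^ 2) / (2 * μ) := by
  have hk' : (2 : ℝ) ≤ k := by exact_mod_cast hk
  rw [coverWindow, Real.volume_real_Ioc_of_le (dilationTime_le_dilationTime hμ
    (div_nonneg (by nlinarith) (by positivity)) (div_sq_add_le_div_sq hk' hkx))]
  unfold dilationTime
  rw [div_pow, div_pow, ← pow_mul]
  ring

theorem coverWindow_subset_Ioc (hμ : 0 < μ) {T : ℝ} {k : ℕ} (hk : 1 ≤ k)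
    (hkx : (k : ℝ) ^ 2 + k ≤ x + 1) (hkT : (x - 1) ^ 2 ≤ (1 + 2 * μ * T) * (k : ℝ) ^ 4) :
    coverWindow μ x k ⊆ Ioc 0 T := by
  have hk' : (1 : ℝ) ≤ k := by exact_mod_cast hk
  apply Ioc_subset_Ioc (dilationTime_nonneg hμ ((one_le_div (by positivity)).mpr hkx))
  rw [dilationTime_le_iff hμ, div_pow, ← pow_mul, div_le_iff₀ (by positivity)]
  exact hkT

theorem pairwise_disjoint_coverWindow (hμ : 0 < μ) (hx : 1 ≤ x) :
    Pairwise (Disjoint on coverWindow μ x) := by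
  refine (pairwise_disjoint_on _).mpr fun j k hjk => ?_
  rcases Nat.eq_zero_or_pos j with rfl | hj
  · simp [coverWindow]
  have hj' : (1 : ℝ) ≤ j := by exact_mod_cast hj
  have hjk' : (j : ℝ) + 1 ≤ k := by exact_mod_cast hjk
  have hsq : (j : ℝ) ^ 2 + j ≤ (k : ℝ) ^ 2 := by nlinarith
  have hscale : (x - 1) / (k : ℝ) ^ 2 ≤ (x + 1) / ((j : ℝ) ^ 2 + j) := by
    rw [div_le_div_iff₀ (by nlinarith) (by positivity)]
    nlinarith [mul_le_mul_of_nonneg_left hsq (by linarith : 0 ≤ x - 1)]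
  exact (Ioc_disjoint_Ioc_of_le (dilationTime_le_dilationTime hμ
    (div_nonneg (by linarith) (by positivity)) hscale)).symm

end coverWindow

theorem two_mul_measureReal_coverWindow {μ x : ℝ} (hμ : 0 < μ) {k : ℕ} (hk : 2 ≤ k)
    (hkx : (k : ℝ) ^ 2 + k ≤ x + 1) :
    2 * volume.real (coverWindow μ x k) =
      (x - 1) ^ 2 / μ * (1 / (k : ℝ) ^ 4 *
        (1 - ((x + 1) / (x - 1)) ^ 2 * (1 / (1 + 1 / (k : ℝ)) ^ 2))) := by
  have hk' : (2 : ℝ) ≤ k := by exact_mod_cast hk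
  have hx : x - 1 ≠ 0 := by nlinarith
  rw [measureReal_coverWindow hμ hk hkx]
  field_simp

/-- `k ∈ I(x)`. -/
def IsDilationIndex (μ T x : ℝ) (k : ℕ) : Prop :=
  2 ≤ k ∧ √(x - 1) / (1 + 2 * μ * T) ^ ((1 : ℝ) / 4) ≤ (k : ℝ) ∧
    (k : ℝ) ≤ (√(4 * x + 5) - 1) / 2

namespace IsDilationIndex

variable {μ T x : ℝ} {k : ℕ}

theorem bounds (hc : 0 < 1 + 2 * μ * T) (hx : 1 ≤ x) (h : IsDilationIndex μ T x k) :
    (k : ℝ) ^ 2 + k ≤ x + 1 ∧ (x - 1) ^ 2 ≤ (1 + 2 * μ * T) * (k : ℝ) ^ 4 :=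
  ⟨sq_add_le_of_le_sqrt_sub_one_div_two k.cast_nonneg h.2.2,
    sq_le_mul_pow_four_of_sqrt_div_rpow_le (by linarith) hc h.2.1⟩

theorem le_floor (hc : 0 < 1 + 2 * μ * T) (hx : 1 ≤ x) (h : IsDilationIndex μ T x k) :
    k ≤ ⌊x⌋₊ := by
  have hk : (2 : ℝ) ≤ k := by exact_mod_cast h.1
  have := (h.bounds hc hx).1
  exact Nat.le_floor (by nlinarith)

end IsDilationIndex

def baseDomain : Set ℝ :=
  Icc (-1 : ℝ) 1 ∪ ⋃ n : ℕ, ⋃ (_ : 1 ≤ n),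
    (Ioo ((n : ℝ) ^ 2) ((n : ℝ) ^ 2 + n) ∪ Ioo (-(n : ℝ) ^ 2 - n) (-(n : ℝ) ^ 2))

theorem measurableSet_baseDomain : MeasurableSet baseDomain :=
  measurableSet_Icc.union
    (.iUnion fun _ => .iUnion fun _ => measurableSet_Ioo.union measurableSet_Ioo)

theorem measureReal_Ioo_inter_smul_baseDomain_of_mem_coverWindow {μ x t : ℝ} (hμ : 0 < μ)
    (hx : 1 ≤ x) {k : ℕ} (hk : 1 ≤ k) (ht : t ∈ coverWindow μ x k) :
    volume.real (Ioo (x - 1) (x + 1) ∩ √(1 + 2 * μ * t) • baseDomain) = 2 := by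
  have hsub : Ioo ((k : ℝ) ^ 2) ((k : ℝ) ^ 2 + k) ⊆ baseDomain := fun y hy =>
    Or.inr (mem_iUnion₂.2 ⟨k, hk, Or.inl hy⟩)
  rw [inter_eq_left.2 ((Ioo_subset_smul_Ioo_of_mem_coverWindow hμ hx hk ht).trans
    (smul_set_mono hsub)), Real.volume_real_Ioo_of_le (by linarith)]
  ring

/-- Intermediate estimate in the proof of Proposition 2.5 (dilation example). -/
theorem dilation_integral_lower_bound (μ T : ℝ) (hμ : 0 < μ) (hT : 0 < T)
    (ω : Set ℝ)
    (hω : ω = Set.Icc (-1 : ℝ) 1 ∪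
      ⋃ n : ℕ, ⋃ (_ : 1 ≤ n),
        (Set.Ioo ((n : ℝ) ^ 2) ((n : ℝ) ^ 2 + n) ∪
          Set.Ioo (-(n : ℝ) ^ 2 - n) (-(n : ℝ) ^ 2)))
    (ωt : ℝ → Set ℝ)
    (hωt : ∀ t : ℝ, ωt t = (fun y => Real.sqrt (1 + 2 * μ * t) * y) '' ω) :
    ∀ x : ℝ, max 5 (Real.sqrt (1 + 2 * μ * T)) < x →
      (x - 1) ^ 2 / μ *
          ∑' k : ℕ,
            (if 2 ≤ k ∧ Real.sqrt (x - 1) / (1 + 2 * μ * T) ^ ((1 : ℝ) / 4) ≤ (k : ℝ) ∧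
                (k : ℝ) ≤ (Real.sqrt (4 * x + 5) - 1) / 2 then
              (1 / (k : ℝ) ^ 4) *
                (1 - ((x + 1) / (x - 1)) ^ 2 * (1 / (1 + 1 / (k : ℝ)) ^ 2))
            else 0) ≤
        ∫ t in Set.Ioc (0 : ℝ) T, (volume (Set.Ioo (x - 1) (x + 1) ∩ ωt t)).toReal := by
  intro x hx
  obtain rfl : ω = baseDomain := hω
  obtain rfl : ωt = fun t => √(1 + 2 * μ * t) • baseDomain := funext hωt
  have hx1 : 1 ≤ x := by linarith [(le_max_left _ _).trans_lt hx]
  have hc : 0 < 1 + 2 * μ * T := by positivity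
  rw [tsum_eq_sum (s := Finset.range (⌊x⌋₊ + 1)) ?_, ← Finset.sum_filter, Finset.mul_sum]
  swap
  · exact fun k hk => if_neg fun h =>
      hk (Finset.mem_range_succ_iff.2 (IsDilationIndex.le_floor hc hx1 h))
  refine le_of_eq_of_le (Finset.sum_congr rfl fun k hk =>
    (two_mul_measureReal_coverWindow hμ (Finset.mem_filter.1 hk).2.1
      (IsDilationIndex.bounds hc hx1 (Finset.mem_filter.1 hk).2).1).symm) ?_
  refine sum_mul_measureReal_le_setIntegral measurableSet_Ioc measure_Ioc_lt_top.ne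
    (integrableOn_measureReal_inter_smul measurableSet_Ioo measure_Ioo_lt_top.ne
      measurableSet_baseDomain measurableSet_Ioc measure_Ioc_lt_top.ne (by fun_prop)
      fun t ht => (Real.sqrt_pos.2 (by nlinarith [ht.1])).ne')
    (fun _ _ => ENNReal.toReal_nonneg) (fun _ _ => measurableSet_Ioc) (fun k hk => ?_)
    ((pairwise_disjoint_coverWindow hμ hx1).set_pairwise _) (fun k hk t ht => ?_)
  all_goals obtain ⟨-, hI⟩ := Finset.mem_filter.1 hk
  · obtain ⟨hkx, hkT⟩ := IsDilationIndex.bounds hc hx1 hI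
    exact coverWindow_subset_Ioc hμ (one_le_two.trans hI.1) hkx hkT
  · exact (measureReal_Ioo_inter_smul_baseDomain_of_mem_coverWindow hμ hx1
      (one_le_two.trans hI.1) ht).ge
end

section
/- Let (φ_n)_{n≥0} be the standard Hermite functions on ℝ. Then for all nonnegative integers n, k, l: ‖x^k ∂_x^l φ_n‖_{L²(ℝ)} ≤ 2^{(k+l)/2} √((k+l+n)!/n!). -/
/-!
The Hermite functions arise from the Gaussian by the raising operator `x - d/dx`, and the
commutation relation `[x + d/dx, x - d/dx] = 2` shows by induction that the lowering operator
`x + d/dx` maps `φ_n` to `√(2n) φ_{n-1}`. Adding and subtracting the two ladder relations gives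
`x φ_n` and `φ_n'` as `±√((n+1)/2) φ_{n+1} + √(n/2) φ_{n-1}`, and since the two operators
are adjoint (integration by parts), `‖φ_n‖ = 1`. Peeling one factor `x` or one derivative off
`x^k ∂^l φ_n` and using the triangle inequality, the bound `B(m, n) = 2^{m/2} √((m+n)!/n!)`
propagates by induction on `m = k + l`, because `√((n+1)/2) B(m, n+1)` and `√(n/2) B(m, n-1)`
are each at most `B(m+1, n) / 2`.
-/

open MeasureTheory Nat

/-- The standard Hermite functions `φ_n = a₊ⁿ φ₀ / √(n!)`, where
`a₊ = (x - d/dx)/√2` and `φ₀(x) = π^{-1/4} e^{-x²/2}`. -/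
noncomputable def hermiteFun : ℕ → ℝ → ℝ
  | 0 => fun x => Real.pi ^ (-(1 : ℝ) / 4) * Real.exp (-x ^ 2 / 2)
  | n + 1 => fun x =>
      (Real.sqrt (2 * (n + 1)))⁻¹ * (x * hermiteFun n x - deriv (hermiteFun n) x)

open Polynomial

def IsPolyGaussian (f : ℝ → ℝ) : Prop :=
  ∃ p : ℝ[X], f = fun x => p.eval x * Real.exp (-x ^ 2 / 2)

theorem hasDerivAt_eval_mul_exp_neg_sq_div_two (p : ℝ[X]) (x : ℝ) :
    HasDerivAt (fun y => p.eval y * Real.exp (-y ^ 2 / 2))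
      ((derivative p - X * p).eval x * Real.exp (-x ^ 2 / 2)) x := by
  have hexp : HasDerivAt (fun y : ℝ => Real.exp (-y ^ 2 / 2)) (-x * Real.exp (-x ^ 2 / 2)) x := by
    have h : HasDerivAt (fun y : ℝ => -y ^ 2 / 2) (-x) x := by
      refine ((hasDerivAt_pow 2 x).neg.div_const 2).congr_deriv ?_
      push_cast; ring
    convert h.exp using 1; ring
  refine ((p.hasDerivAt x).mul hexp).congr_deriv ?_
  rw [eval_sub, eval_mul, eval_X]; ring

theorem integrable_eval_mul_exp_neg_sq (p : ℝ[X]) :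
    Integrable fun x : ℝ => p.eval x * Real.exp (-x ^ 2) := by
  induction p using Polynomial.induction_on' with
  | add p q hp hq =>
    simp only [eval_add, add_mul]
    exact hp.add hq
  | monomial n c =>
    have h := integrable_rpow_mul_exp_neg_mul_sq one_pos (s := n)
      (neg_one_lt_zero.trans_le n.cast_nonneg)
    simp only [Real.rpow_natCast, neg_mul, one_mul] at h
    simpa only [eval_monomial, mul_assoc] using h.const_mul c

namespace IsPolyGaussian

variable {f g : ℝ → ℝ}

theorem contDiff (hf : IsPolyGaussian f) {m : WithTop ℕ∞} : ContDiff ℝ m f := by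
  obtain ⟨p, rfl⟩ := hf
  have hp : ContDiff ℝ m fun x : ℝ => p.eval x := by
    simpa only [coe_aeval_eq_eval] using p.contDiff_aeval (𝕜 := ℝ) m
  exact hp.mul (Real.contDiff_exp.comp ((contDiff_id.pow 2).neg.div_const 2))

theorem differentiable (hf : IsPolyGaussian f) : Differentiable ℝ f :=
  (hf.contDiff (m := 1)).differentiable one_ne_zero

theorem deriv (hf : IsPolyGaussian f) : IsPolyGaussian (deriv f) := by
  obtain ⟨p, rfl⟩ := hf
  exact ⟨derivative p - X * p,
    funext fun x => (hasDerivAt_eval_mul_exp_neg_sq_div_two p x).deriv⟩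

theorem const_mul (hf : IsPolyGaussian f) (c : ℝ) : IsPolyGaussian fun x => c * f x := by
  obtain ⟨p, rfl⟩ := hf
  exact ⟨C c * p, funext fun x => by simp only [eval_mul, eval_C]; ring⟩

theorem id_mul (hf : IsPolyGaussian f) : IsPolyGaussian fun x => x * f x := by
  obtain ⟨p, rfl⟩ := hf
  exact ⟨X * p, funext fun x => by simp only [eval_mul, eval_X]; ring⟩

theorem sub (hf : IsPolyGaussian f) (hg : IsPolyGaussian g) :
    IsPolyGaussian fun x => f x - g x := by
  obtain ⟨p, rfl⟩ := hf
  obtain ⟨q, rfl⟩ := hg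
  exact ⟨p - q, funext fun x => by simp only [eval_sub]; ring⟩

theorem integrable_mul (hf : IsPolyGaussian f) (hg : IsPolyGaussian g) :
    Integrable fun x => f x * g x := by
  obtain ⟨p, rfl⟩ := hf
  obtain ⟨q, rfl⟩ := hg
  convert integrable_eval_mul_exp_neg_sq (p * q) using 2 with x
  rw [eval_mul, show -x ^ 2 = -x ^ 2 / 2 + -x ^ 2 / 2 by ring, Real.exp_add]
  ring

theorem integral_mul_deriv (hf : IsPolyGaussian f) (hg : IsPolyGaussian g) :
    ∫ x, f x * _root_.deriv g x = -∫ x, _root_.deriv f x * g x :=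
  integral_mul_deriv_eq_deriv_mul_of_integrable
    (fun x _ => (hf.differentiable x).hasDerivAt) (fun x _ => (hg.differentiable x).hasDerivAt)
    (hf.integrable_mul hg.deriv) (hf.deriv.integrable_mul hg) (hf.integrable_mul hg)

end IsPolyGaussian

noncomputable def raising (f : ℝ → ℝ) : ℝ → ℝ := fun x => x * f x - deriv f x

noncomputable def lowering (f : ℝ → ℝ) : ℝ → ℝ := fun x => x * f x + deriv f x

theorem raising_const_mul (c : ℝ) (f : ℝ → ℝ) :
    raising (fun x => c * f x) = fun x => c * raising f x := by
  funext x; simp only [raising, deriv_const_mul_field']; ring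

theorem lowering_const_mul (c : ℝ) (f : ℝ → ℝ) :
    lowering (fun x => c * f x) = fun x => c * lowering f x := by
  funext x; simp only [lowering, deriv_const_mul_field']; ring

theorem lowering_raising {f : ℝ → ℝ} (hf : ContDiff ℝ 2 f) :
    lowering (raising f) = fun x => raising (lowering f) x + 2 * f x := by
  obtain ⟨hf₁, -, hf'⟩ := (contDiff_succ_iff_deriv (n := 1)).mp hf
  have hf'₁ : Differentiable ℝ (deriv f) := hf'.differentiable one_ne_zero
  have hid : ∀ x : ℝ, HasDerivAt (fun y => y * f y) (f x + x * deriv f x) x := fun x => by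
    simpa using (hasDerivAt_id' x).fun_mul (hf₁ x).hasDerivAt
  have hr : deriv (raising f) = fun x => f x + x * deriv f x - deriv (deriv f) x :=
    funext fun x => ((hid x).sub (hf'₁ x).hasDerivAt).deriv
  have hl : deriv (lowering f) = fun x => f x + x * deriv f x + deriv (deriv f) x :=
    funext fun x => ((hid x).add (hf'₁ x).hasDerivAt).deriv
  funext x
  simp only [lowering, raising, hr, hl] at *
  ring

theorem IsPolyGaussian.integral_raising_mul {f g : ℝ → ℝ} (hf : IsPolyGaussian f)
    (hg : IsPolyGaussian g) : ∫ x, raising f x * g x = ∫ x, f x * lowering g x := by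
  simp only [raising, lowering, sub_mul, mul_add]
  rw [integral_sub (hf.id_mul.integrable_mul hg) (hf.deriv.integrable_mul hg),
    integral_add (hf.integrable_mul hg.id_mul) (hf.integrable_mul hg.deriv),
    hf.integral_mul_deriv hg, sub_eq_add_neg]
  congr 2 with x
  ring

theorem hermiteFun_succ (n : ℕ) :
    hermiteFun (n + 1) = fun x => (√(2 * (n + 1)))⁻¹ * raising (hermiteFun n) x := rfl

theorem isPolyGaussian_hermiteFun (n : ℕ) : IsPolyGaussian (hermiteFun n) := by
  induction n with
  | zero => exact ⟨C (Real.pi ^ (-(1 : ℝ) / 4)), funext fun x => by simp [hermiteFun]⟩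
  | succ n ih => exact (ih.id_mul.sub ih.deriv).const_mul _

theorem contDiff_hermiteFun (n : ℕ) {m : WithTop ℕ∞} : ContDiff ℝ m (hermiteFun n) :=
  (isPolyGaussian_hermiteFun n).contDiff

@[fun_prop]
theorem continuous_hermiteFun (n : ℕ) : Continuous (hermiteFun n) :=
  (contDiff_hermiteFun n (m := 0)).continuous

@[fun_prop]
theorem continuous_iteratedDeriv_hermiteFun (l n : ℕ) :
    Continuous (iteratedDeriv l (hermiteFun n)) :=
  (contDiff_hermiteFun n).continuous_iteratedDeriv l le_rfl

theorem raising_hermiteFun (n : ℕ) :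
    raising (hermiteFun n) = fun x => √(2 * (n + 1)) * hermiteFun (n + 1) x := by
  have hc : √(2 * ((n : ℝ) + 1)) ≠ 0 := by positivity
  funext x
  rw [hermiteFun_succ, ← mul_assoc, mul_inv_cancel₀ hc, one_mul]

-- At `n = 0` the index `n - 1` truncates to `0`, which is harmless since `√(2 * 0) = 0`.
theorem lowering_hermiteFun (n : ℕ) :
    lowering (hermiteFun n) = fun x => √(2 * n) * hermiteFun (n - 1) x := by
  induction n with
  | zero =>
    funext x
    have h := (hasDerivAt_eval_mul_exp_neg_sq_div_two (C (Real.pi ^ (-(1 : ℝ) / 4))) x).deriv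
    simp only [eval_C, derivative_C, eval_sub, eval_mul, eval_X] at h
    simp only [lowering, hermiteFun, h, eval_zero]
    ring
  | succ n ih =>
    have hraise : (fun x => √(2 * n) * raising (hermiteFun (n - 1)) x)
        = fun x => 2 * n * hermiteFun n x := by
      rcases n with _ | n
      · simp
      · funext x
        rw [raising_hermiteFun, Nat.add_sub_cancel]
        push_cast
        rw [← mul_assoc, Real.mul_self_sqrt (by positivity)]
    rw [hermiteFun_succ, lowering_const_mul, lowering_raising (contDiff_hermiteFun n), ih,
      raising_const_mul, hraise]
    funext x
    have hc : √(2 * ((n : ℝ) + 1)) ≠ 0 := by positivity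
    field_simp
    push_cast
    rw [Real.mul_self_sqrt (by positivity)]

theorem integral_hermiteFun_sq (n : ℕ) : ∫ x, hermiteFun n x ^ 2 = 1 := by
  induction n with
  | zero =>
    have hsq (x : ℝ) :
        hermiteFun 0 x ^ 2 = Real.pi ^ (-(1 : ℝ) / 2) * Real.exp (-1 * x ^ 2) := by
      rw [hermiteFun, mul_pow, ← Real.rpow_natCast, ← Real.rpow_mul Real.pi_pos.le,
        ← Real.exp_nat_mul]
      congr 2 <;> push_cast <;> ring
    simp only [hsq, integral_const_mul, integral_gaussian, div_one]
    rw [Real.sqrt_eq_rpow, ← Real.rpow_add Real.pi_pos]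
    norm_num
  | succ n ih =>
    have hc : √(2 * ((n : ℝ) + 1)) ≠ 0 := by positivity
    have hφ := isPolyGaussian_hermiteFun
    calc ∫ x, hermiteFun (n + 1) x ^ 2
        = (√(2 * (n + 1)))⁻¹ * ∫ x, raising (hermiteFun n) x * hermiteFun (n + 1) x := by
          rw [← integral_const_mul]
          congr 1 with x
          rw [sq]; nth_rw 1 [hermiteFun_succ]; ring
      _ = (√(2 * (n + 1)))⁻¹ * ∫ x, hermiteFun n x * lowering (hermiteFun (n + 1)) x := by
          rw [(hφ n).integral_raising_mul (hφ (n + 1))]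
      _ = ∫ x, hermiteFun n x ^ 2 := by
          rw [lowering_hermiteFun, ← integral_const_mul]
          congr 1 with x
          push_cast
          field_simp
      _ = 1 := ih

theorem eLpNorm_hermiteFun (n : ℕ) : eLpNorm (hermiteFun n) 2 volume = 1 := by
  have hφ := isPolyGaussian_hermiteFun n
  have hmem : MemLp (hermiteFun n) 2 :=
    (memLp_two_iff_integrable_sq (continuous_hermiteFun n).aestronglyMeasurable).2
      (by simpa only [sq] using hφ.integrable_mul hφ)
  rw [hmem.eLpNorm_eq_integral_rpow_norm two_ne_zero ENNReal.ofNat_ne_top]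
  simp [integral_hermiteFun_sq]

theorem Real.sqrt_two_mul (a : ℝ) : √(2 * a) = 2 * √(a / 2) := by
  rw [show 2 * a = 2 ^ 2 * (a / 2) by ring, Real.sqrt_mul (by positivity),
    Real.sqrt_sq zero_le_two]

theorem mul_hermiteFun (n : ℕ) (x : ℝ) :
    x * hermiteFun n x =
      √((n + 1) / 2) * hermiteFun (n + 1) x + √(n / 2) * hermiteFun (n - 1) x := by
  have hr := congrFun (raising_hermiteFun n) x
  have hl := congrFun (lowering_hermiteFun n) x
  simp only [raising, lowering, Real.sqrt_two_mul] at hr hl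
  linarith

theorem deriv_hermiteFun (n : ℕ) :
    deriv (hermiteFun n) = fun x =>
      √(n / 2) * hermiteFun (n - 1) x - √((n + 1) / 2) * hermiteFun (n + 1) x := by
  funext x
  have hr := congrFun (raising_hermiteFun n) x
  have hl := congrFun (lowering_hermiteFun n) x
  simp only [raising, lowering, Real.sqrt_two_mul] at hr hl
  linarith

theorem iteratedDeriv_succ_hermiteFun (l n : ℕ) (x : ℝ) :
    iteratedDeriv (l + 1) (hermiteFun n) x =
      -√((n + 1) / 2) * iteratedDeriv l (hermiteFun (n + 1)) x +
        √(n / 2) * iteratedDeriv l (hermiteFun (n - 1)) x := by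
  rw [iteratedDeriv_succ', deriv_hermiteFun, iteratedDeriv_fun_sub
    (contDiff_const.mul (contDiff_hermiteFun _)).contDiffAt
    (contDiff_const.mul (contDiff_hermiteFun _)).contDiffAt,
    iteratedDeriv_const_mul_field, iteratedDeriv_const_mul_field]
  ring

theorem succ_mul_factorial_div_factorial_succ (m n : ℕ) :
    ((n : ℝ) + 1) * ((m + (n + 1))! / (n + 1)!) = (m + 1 + n)! / n ! := by
  rw [show m + (n + 1) = m + 1 + n by ring, Nat.factorial_succ]
  push_cast
  field_simp

theorem mul_factorial_div_factorial_pred_le (m n : ℕ) :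
    (n : ℝ) * ((m + (n - 1))! / (n - 1)!) ≤ (m + 1 + n)! / n ! := by
  rcases n with _ | j
  · simp only [CharP.cast_eq_zero, zero_mul]; positivity
  · rw [Nat.add_sub_cancel, show m + 1 + (j + 1) = m + j + 1 + 1 by ring, Nat.factorial_succ,
      Nat.factorial_succ, Nat.factorial_succ j]
    push_cast
    have hj : (0 : ℝ) < j ! := by positivity
    have hlhs :
        ((j : ℝ) + 1) * ((m + j)! / j !) * ((j + 1) * j !) = (j + 1) ^ 2 * (m + j)! := by
      field_simp
    rw [le_div_iff₀ (by positivity), hlhs, ← mul_assoc]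
    gcongr
    nlinarith

noncomputable def hermiteBound (m n : ℕ) : ℝ := 2 ^ ((m : ℝ) / 2) * √((m + n)! / n !)

theorem hermiteBound_zero (n : ℕ) : hermiteBound 0 n = 1 := by
  simp [hermiteBound, n.factorial_ne_zero]

theorem hermiteBound_nonneg (m n : ℕ) : 0 ≤ hermiteBound m n := by
  unfold hermiteBound; positivity

theorem sqrt_mul_hermiteBound_add_le (m n : ℕ) :
    √((n + 1) / 2) * hermiteBound m (n + 1) + √(n / 2) * hermiteBound m (n - 1) ≤
      hermiteBound (m + 1) n := by
  set R : ℝ := ((m + 1 + n)! / n !)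
  have hup : √((n + 1) / 2) * √((m + (n + 1))! / (n + 1)!) ≤ √(R / 2) := by
    rw [← Real.sqrt_mul (by positivity)]
    refine Real.sqrt_le_sqrt ?_
    have := succ_mul_factorial_div_factorial_succ m n
    linarith
  have hdown : √(n / 2) * √((m + (n - 1))! / (n - 1)!) ≤ √(R / 2) := by
    rw [← Real.sqrt_mul (by positivity)]
    refine Real.sqrt_le_sqrt ?_
    have := mul_factorial_div_factorial_pred_le m n
    linarith
  have hpow : (2 : ℝ) ^ (((m + 1 : ℕ) : ℝ) / 2) = 2 ^ ((m : ℝ) / 2) * √2 := by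
    rw [Real.sqrt_eq_rpow, ← Real.rpow_add two_pos]; push_cast; ring_nf
  calc _ = 2 ^ ((m : ℝ) / 2) * (√((n + 1) / 2) * √((m + (n + 1))! / (n + 1)!) +
        √(n / 2) * √((m + (n - 1))! / (n - 1)!)) := by
        simp only [hermiteBound]; ring
    _ ≤ 2 ^ ((m : ℝ) / 2) * (2 * √(R / 2)) := by gcongr; linarith
    _ = hermiteBound (m + 1) n := by
        rw [← Real.sqrt_two_mul, Real.sqrt_mul zero_le_two, ← mul_assoc, ← hpow]
        rfl

theorem eLpNorm_mul_add_mul_le {α : Type*} [MeasurableSpace α] {μ : Measure α}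
    {p : ENNReal} (hp : 1 ≤ p) {f g : α → ℝ} (hf : AEStronglyMeasurable f μ)
    (hg : AEStronglyMeasurable g μ) (a b : ℝ) :
    eLpNorm (fun x => a * f x + b * g x) p μ ≤
      ENNReal.ofReal |a| * eLpNorm f p μ + ENNReal.ofReal |b| * eLpNorm g p μ := by
  rw [← Real.enorm_eq_ofReal_abs, ← Real.enorm_eq_ofReal_abs, ← eLpNorm_const_smul,
    ← eLpNorm_const_smul]
  exact eLpNorm_add_le (hf.const_smul a) (hg.const_smul b) hp

theorem eLpNorm_le_hermiteBound_succ {α : Type*} [MeasurableSpace α] {μ : Measure α}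
    {f g₁ g₂ : α → ℝ} {a b : ℝ} {m n : ℕ} (hf : ∀ x, f x = a * g₁ x + b * g₂ x)
    (ha : |a| = √((n + 1) / 2)) (hb : |b| = √(n / 2))
    (hg₁ : AEStronglyMeasurable g₁ μ) (hg₂ : AEStronglyMeasurable g₂ μ)
    (h₁ : eLpNorm g₁ 2 μ ≤ ENNReal.ofReal (hermiteBound m (n + 1)))
    (h₂ : eLpNorm g₂ 2 μ ≤ ENNReal.ofReal (hermiteBound m (n - 1))) :
    eLpNorm f 2 μ ≤ ENNReal.ofReal (hermiteBound (m + 1) n) := by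
  calc eLpNorm f 2 μ
      ≤ ENNReal.ofReal |a| * eLpNorm g₁ 2 μ + ENNReal.ofReal |b| * eLpNorm g₂ 2 μ := by
        rw [funext hf]; exact eLpNorm_mul_add_mul_le one_le_two hg₁ hg₂ a b
    _ ≤ ENNReal.ofReal |a| * ENNReal.ofReal (hermiteBound m (n + 1)) +
        ENNReal.ofReal |b| * ENNReal.ofReal (hermiteBound m (n - 1)) := by gcongr
    _ = ENNReal.ofReal (√((n + 1) / 2) * hermiteBound m (n + 1) +
        √(n / 2) * hermiteBound m (n - 1)) := by
        rw [ha, hb, ← ENNReal.ofReal_mul (by positivity), ← ENNReal.ofReal_mul (by positivity),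
          ← ENNReal.ofReal_add (mul_nonneg (Real.sqrt_nonneg _) (hermiteBound_nonneg _ _))
            (mul_nonneg (Real.sqrt_nonneg _) (hermiteBound_nonneg _ _))]
    _ ≤ ENNReal.ofReal (hermiteBound (m + 1) n) :=
        ENNReal.ofReal_le_ofReal (sqrt_mul_hermiteBound_add_le m n)

theorem eLpNorm_pow_mul_hermiteFun_le (k n : ℕ) :
    eLpNorm (fun x => x ^ k * hermiteFun n x) 2 volume ≤ ENNReal.ofReal (hermiteBound k n) := by
  induction k generalizing n with
  | zero => simp [eLpNorm_hermiteFun, hermiteBound_zero]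
  | succ k ih =>
    refine eLpNorm_le_hermiteBound_succ (fun x => ?_) (abs_of_nonneg (Real.sqrt_nonneg _))
      (abs_of_nonneg (Real.sqrt_nonneg _))
      (by fun_prop) (by fun_prop)
      (ih (n + 1)) (ih (n - 1))
    rw [pow_succ, mul_assoc, mul_hermiteFun]; ring

theorem eLpNorm_pow_mul_iteratedDeriv_hermiteFun_le (k l n : ℕ) :
    eLpNorm (fun x => x ^ k * iteratedDeriv l (hermiteFun n) x) 2 volume ≤
      ENNReal.ofReal (hermiteBound (k + l) n) := by
  induction l generalizing n with
  | zero => simpa using eLpNorm_pow_mul_hermiteFun_le k n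
  | succ l ih =>
    refine eLpNorm_le_hermiteBound_succ (a := -√((n + 1) / 2)) (fun x => ?_)
      (by rw [abs_neg, abs_of_nonneg (Real.sqrt_nonneg _)]) (abs_of_nonneg (Real.sqrt_nonneg _))
      (by fun_prop) (by fun_prop)
      (ih (n + 1)) (ih (n - 1))
    rw [iteratedDeriv_succ_hermiteFun]; ring

/-- Estimate (6.4) of Lemma 6.4: `‖x^k ∂_x^l φ_n‖_{L²} ≤ 2^{(k+l)/2} √((k+l+n)!/n!)`. -/
theorem hermite_weighted_L2_bound (n k l : ℕ) :
    eLpNorm (fun x : ℝ => x ^ k * iteratedDeriv l (hermiteFun n) x) 2 volume ≤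
      ENNReal.ofReal (2 ^ (((k : ℝ) + l) / 2) *
        Real.sqrt (((k + l + n)! : ℝ) / (n ! : ℝ))) := by
  simpa [hermiteBound] using eLpNorm_pow_mul_iteratedDeriv_hermiteFun_le k l n
end
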